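/- For a generalized permutahedron P(z) ⊆ ℝ^n and any permutation w ∈ S_n, the point v(w) ∈ ℝ^n defined by v_{w(k)} = z({w(1),...,w(k)}) − z({w(1),...,w(k−1)}) lies in P(z). -/
import Mathlib


open Finset

/-- A submodular function on subsets of `[n]`. -/
def Submodular {n : ℕ} (z : Finset (Fin n) → ℝ) : Prop :=
  z ∅ = 0 ∧ ∀ I J : Finset (Fin n), z (I ∪ J) + z (I ∩ J) ≤ z I + z J

/-- The generalized permutahedron associated to `z`. -/
def GenPerm {n : ℕ} (z : Finset (Fin n) → ℝ) : Set (Fin n → ℝ) :=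
  {t | (∀ I : Finset (Fin n), ∑ i ∈ I, t i ≤ z I) ∧ ∑ i, t i = z univ}

/-- The image under `w` of the first `m` positions. -/
def prefixSet {n : ℕ} (w : Equiv.Perm (Fin n)) (m : ℕ) : Finset (Fin n) :=
  (univ.filter fun j : Fin n => (j : ℕ) < m).image w

/-- The vertex `v(w)` of the generalized permutahedron: its coordinate at `w(k)` is
`z({w(1),…,w(k)}) − z({w(1),…,w(k−1)})`. -/
noncomputable def vertexPt {n : ℕ} (z : Finset (Fin n) → ℝ) (w : Equiv.Perm (Fin n)) :
    Fin n → ℝ :=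
  fun i => z (prefixSet w ((w.symm i : ℕ) + 1)) - z (prefixSet w (w.symm i : ℕ))

lemma mem_prefixSet {n : ℕ} (w : Equiv.Perm (Fin n)) (m : ℕ) (i : Fin n) :
    i ∈ prefixSet w m ↔ (w.symm i : ℕ) < m := by
  simp only [prefixSet, mem_image, mem_filter, mem_univ, true_and]
  constructor
  · rintro ⟨j, hj, rfl⟩; simpa using hj
  · intro h; exact ⟨w.symm i, h, by simp⟩

lemma prefixSet_zero {n : ℕ} (w : Equiv.Perm (Fin n)) : prefixSet w 0 = ∅ := by
  ext i; simp [mem_prefixSet]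

lemma prefixSet_of_ge {n : ℕ} (w : Equiv.Perm (Fin n)) {m : ℕ} (h : n ≤ m) :
    prefixSet w m = univ := by
  ext i; simp [mem_prefixSet, lt_of_lt_of_le (w.symm i).2 h]

lemma prefixSet_succ {n : ℕ} (w : Equiv.Perm (Fin n)) {m : ℕ} (h : m < n) :
    prefixSet w (m + 1) = insert (w ⟨m, h⟩) (prefixSet w m) := by
  ext i
  simp only [mem_prefixSet, mem_insert, Nat.lt_succ_iff_lt_or_eq]
  constructor
  · rintro (h1 | h2)
    · exact Or.inr h1
    · left
      have : w.symm i = ⟨m, h⟩ := Fin.ext h2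
      rw [← this]; simp
  · rintro (rfl | h1)
    · right; simp
    · exact Or.inl h1

theorem stmt2 {n : ℕ} (z : Finset (Fin n) → ℝ) (hz : Submodular z)
    (w : Equiv.Perm (Fin n)) :
    vertexPt z w ∈ GenPerm z := by
  obtain ⟨hz0, hsub⟩ := hz
  constructor
  · intro I
    have key : ∀ m : ℕ, ∑ i ∈ I ∩ prefixSet w m, vertexPt z w i ≤ z (I ∩ prefixSet w m) := by
      intro m
      induction m with
      | zero => simp [prefixSet_zero, hz0]
      | succ m ih =>
        rcases lt_or_ge m n with hm | hm
        · set x := w ⟨m, hm⟩ with hx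
          have hxnot : x ∉ prefixSet w m := by simp [mem_prefixSet, hx]
          rw [prefixSet_succ w hm]
          by_cases hxI : x ∈ I
          · have hins : I ∩ insert x (prefixSet w m) = insert x (I ∩ prefixSet w m) := by
              rw [Finset.inter_insert_of_mem hxI]
            rw [hins, Finset.sum_insert (by simp [hxnot])]
            have hvx : vertexPt z w x = z (prefixSet w (m + 1)) - z (prefixSet w m) := by
              simp [vertexPt, hx]
            have hsb := hsub (insert x (I ∩ prefixSet w m)) (prefixSet w m)
            have hun : insert x (I ∩ prefixSet w m) ∪ prefixSet w m = prefixSet w (m + 1) := by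
              rw [prefixSet_succ w hm, Finset.insert_union, ← hx]
              congr 1
              exact Finset.union_eq_right.mpr Finset.inter_subset_right
            have hin : insert x (I ∩ prefixSet w m) ∩ prefixSet w m = I ∩ prefixSet w m := by
              rw [Finset.insert_inter_of_notMem hxnot]
              exact Finset.inter_eq_left.mpr Finset.inter_subset_right
            rw [hun, hin] at hsb
            rw [hvx]
            have := ih
            have hgoal : z (insert x (I ∩ prefixSet w m)) = z (I ∩ insert x (prefixSet w m)) := by
              rw [hins]
            linarith
          · rw [Finset.inter_insert_of_notMem hxI]
            exact ih
        · have : prefixSet w (m + 1) = prefixSet w m := by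
            rw [prefixSet_of_ge w hm, prefixSet_of_ge w (le_trans hm (Nat.le_succ m))]
          rw [this]; exact ih
    have := key n
    rwa [prefixSet_of_ge w le_rfl, Finset.inter_univ] at this
  · have h1 : ∑ i, vertexPt z w i = ∑ k : Fin n, vertexPt z w (w k) :=
      (Equiv.sum_comp w _).symm
    have h2 : ∀ k : Fin n, vertexPt z w (w k) =
        z (prefixSet w ((k : ℕ) + 1)) - z (prefixSet w (k : ℕ)) := by
      intro k; simp [vertexPt]
    rw [h1, Fintype.sum_congr _ _ h2, Fin.sum_univ_eq_sum_range
      (fun k => z (prefixSet w (k + 1)) - z (prefixSet w k)),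
      Finset.sum_range_sub (fun k => z (prefixSet w k)),
      prefixSet_zero, prefixSet_of_ge w le_rfl, hz0, sub_zero]
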